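/- For ḡ > 0, the expression (3/2)·(1 - √(ḡ/(2+ḡ))·(1 + 1/(2+ḡ))) is strictly positive, strictly decreasing in ḡ, and tends to 0 as ḡ → ∞. -/

import Mathlib

/-! With `s = √(g / (2 + g)) ∈ [0, 1)` one has `1 / (2 + g) = (1 - s²) / 2`, so the bound is the
cubic `(3/4) (1 - s)² (2 + s)` in `s`. As `g` increases from `0` to `∞`, `s` increases strictly
from `0` to `1`, while the cubic, whose derivative `3 (s² - 1)` is negative on `(-1, 1)`, decreases
strictly to its zero at `s = 1`. -/

open Filter

noncomputable def peBound (g : ℝ) : ℝ :=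
  (3 / 2) * (1 - Real.sqrt (g / (2 + g)) * (1 + 1 / (2 + g)))

theorem strictAntiOn_one_sub_sq_mul_two_add :
    StrictAntiOn (fun s : ℝ => (1 - s) ^ 2 * (2 + s)) (Set.Icc (-1) 1) := by
  intro s hs t ht hst
  have hfactor : (1 - t) ^ 2 * (2 + t) - (1 - s) ^ 2 * (2 + s)
      = -(t - s) * (3 - s ^ 2 - s * t - t ^ 2) := by ring
  have hpos : 0 < 3 - s ^ 2 - s * t - t ^ 2 := by
    nlinarith [hs.1, hs.2, ht.1, ht.2]
  nlinarith [mul_pos (sub_pos.2 hst) hpos]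

theorem tendsto_div_const_add_atTop (c : ℝ) :
    Tendsto (fun x : ℝ => x / (c + x)) atTop (nhds 1) := by
  have hinv : Tendsto (fun x : ℝ => c / (c + x)) atTop (nhds 0) :=
    tendsto_const_nhds.div_atTop (tendsto_atTop_add_const_left _ c tendsto_id)
  have heq : (fun x : ℝ => 1 - c / (c + x)) =ᶠ[atTop] fun x => x / (c + x) := by
    filter_upwards [eventually_gt_atTop (-c)] with x hx
    have : c + x ≠ 0 := by linarith
    field_simp
    ring
  simpa using (tendsto_const_nhds.sub hinv).congr' heq

theorem strictMonoOn_div_const_add {c : ℝ} (hc : 0 < c) :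
    StrictMonoOn (fun x : ℝ => x / (c + x)) (Set.Ioi (-c)) := by
  intro x hx y hy hxy
  simp only [Set.mem_Ioi] at hx hy
  rw [div_lt_div_iff₀ (by linarith) (by linarith)]
  nlinarith

theorem sqrt_div_two_add_mem_Ico {g : ℝ} (hg : 0 ≤ g) :
    Real.sqrt (g / (2 + g)) ∈ Set.Ico 0 1 := by
  refine ⟨Real.sqrt_nonneg _, (Real.sqrt_lt' one_pos).2 ?_⟩
  rw [one_pow, div_lt_one (by linarith)]
  linarith

theorem sqrt_div_two_add_mem_Icc {g : ℝ} (hg : 0 ≤ g) :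
    Real.sqrt (g / (2 + g)) ∈ Set.Icc (-1) 1 :=
  Set.Icc_subset_Icc_left (by norm_num) (Set.Ico_subset_Icc_self (sqrt_div_two_add_mem_Ico hg))

theorem strictMonoOn_sqrt_div_two_add :
    StrictMonoOn (fun g : ℝ => Real.sqrt (g / (2 + g))) (Set.Ici 0) := by
  intro x hx y hy hxy
  have hx' : -2 < x := by linarith [Set.mem_Ici.1 hx]
  have hy' : -2 < y := by linarith [Set.mem_Ici.1 hy]
  exact Real.sqrt_lt_sqrt (div_nonneg hx (by linarith))
    (strictMonoOn_div_const_add two_pos hx' hy' hxy)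

theorem tendsto_sqrt_div_two_add_atTop :
    Tendsto (fun g : ℝ => Real.sqrt (g / (2 + g))) atTop (nhds 1) := by
  simpa using (tendsto_div_const_add_atTop 2).sqrt

theorem peBound_eq {g : ℝ} (hg : 0 ≤ g) :
    peBound g = 3 / 4 * ((1 - Real.sqrt (g / (2 + g))) ^ 2 * (2 + Real.sqrt (g / (2 + g)))) := by
  have hsq : Real.sqrt (g / (2 + g)) ^ 2 = g / (2 + g) := Real.sq_sqrt (by positivity)
  have hinv : 1 / (2 + g) = (1 - Real.sqrt (g / (2 + g)) ^ 2) / 2 := by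
    rw [hsq]; field_simp; ring
  rw [peBound, hinv]
  ring

theorem peBound_pos {g : ℝ} (hg : 0 ≤ g) : 0 < peBound g := by
  have hlt := strictAntiOn_one_sub_sq_mul_two_add (sqrt_div_two_add_mem_Icc hg)
    (Set.right_mem_Icc.2 (by norm_num)) (sqrt_div_two_add_mem_Ico hg).2
  rw [peBound_eq hg]
  norm_num at hlt ⊢
  exact hlt

theorem strictAntiOn_peBound : StrictAntiOn peBound (Set.Ici 0) := by
  intro a ha b hb hab
  rw [peBound_eq ha, peBound_eq hb]
  have hcubic := strictAntiOn_one_sub_sq_mul_two_add (sqrt_div_two_add_mem_Icc ha)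
    (sqrt_div_two_add_mem_Icc hb) (strictMonoOn_sqrt_div_two_add ha hb hab)
  exact mul_lt_mul_of_pos_left hcubic (by norm_num)

theorem tendsto_peBound_atTop : Tendsto peBound atTop (nhds 0) := by
  have hcont : Continuous fun s : ℝ => 3 / 4 * ((1 - s) ^ 2 * (2 + s)) := by fun_prop
  have hlim := (hcont.tendsto 1).comp tendsto_sqrt_div_two_add_atTop
  norm_num at hlim
  refine hlim.congr' ?_
  filter_upwards [eventually_ge_atTop 0] with g hg
  exact (peBound_eq hg).symm

theorem stmt8 :
    (∀ g : ℝ, 0 < g → 0 < peBound g) ∧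
    StrictAntiOn peBound (Set.Ioi 0) ∧
    Tendsto peBound atTop (nhds 0) :=
  ⟨fun _ hg => peBound_pos hg.le, strictAntiOn_peBound.mono Set.Ioi_subset_Ici_self,
    tendsto_peBound_atTop⟩
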